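/- Let S and A be finite nonempty sets, Safe ⊆ S, p : S → A → S → ℝ a transition kernel with p(s,a,s') ≥ 0 and ∑_{s'} p(s,a,s') = 1 for all s, a, and π : ℝ^d → S → A → ℝ a parameterized policy with π(θ,s,a) > 0 and ∑_{a} π(θ,s,a) = 1 for all θ, s, such that θ ↦ π(θ,s,a) is differentiable for every s, a. Fix T ≥ 2, an initial state s_0 ∈ Safe, and define W_T(θ,s) = ∑_{a} π(θ,s,a) ∑_{s'} p(s,a,s')·𝟙(s' ∈ Safe). For a full trajectory τ = (a_0, s_1, …, a_{T−1}, s_T) let q_θ(τ) = ∏_{t=0}^{T−1} π(θ,s_t,a_t)·p(s_t,a_t,s_{t+1}) and G_1(τ) = ∏_{t=1}^{T} 𝟙(s_t ∈ Safe); for a partial trajectory σ = (a_0, s_1, …, a_{T−2}, s_{T−1}) let q_θ^{(T−1)}(σ) = ∏_{t=0}^{T−2} π(θ,s_t,a_t)·p(s_t,a_t,s_{t+1}). Then for every θ: ∑_{σ} q_θ^{(T−1)}(σ)·(∏_{t=1}^{T−1} 𝟙(s_t ∈ Safe))·∇_θ W_T(θ, s_{T−1}) = ∑_{τ} q_θ(τ)·G_1(τ)·∇_θ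 log π(θ, s_{T−1}, a_{T−1}). In expectation notation: E[∇_θ E[G_T | S_{T−1}]·∏_{t=1}^{T−1} 𝟙(S_t ∈ Safe) | S_0] = E[G_1·∇_θ log π_θ(A_{T−1} | S_{T−1}) | S_0]. -/

import Mathlib

open scoped BigOperators

noncomputable section

/-- Pad a finite tuple to a function on all of `ℕ` (values beyond `T` are arbitrary). -/
def pad {α : Type*} [Nonempty α] {T : ℕ} (f : Fin T → α) : ℕ → α :=
  fun n => if h : n < T then f ⟨n, h⟩ else Classical.arbitrary α

/-- The state sequence of a trajectory: `s_0 = s0` and `s_{m+1} = ss m`. -/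
def stSeq {S : Type*} [Nonempty S] {T : ℕ} (s0 : S) (ss : Fin T → S) : ℕ → S
  | 0 => s0
  | (m + 1) => pad ss m

/-- Indicator (as a real number) that a state is safe. -/
def safeInd {S : Type*} (Safe : Set S) [DecidablePred (· ∈ Safe)] (s : S) : ℝ :=
  if s ∈ Safe then 1 else 0

/-- Probability of the (partial) trajectory `(a_0, s_1, …, a_{T-1}, s_T)` starting from `s0`:
`∏_{t=0}^{T-1} π(θ, s_t, a_t) · p(s_t, a_t, s_{t+1})`. -/
def qTraj {S A : Type*} [Nonempty S] [Nonempty A] {d : ℕ}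
    (p : S → A → S → ℝ) (pol : EuclideanSpace ℝ (Fin d) → S → A → ℝ)
    (s0 : S) (T : ℕ) (θ : EuclideanSpace ℝ (Fin d)) (τ : (Fin T → A) × (Fin T → S)) : ℝ :=
  ∏ t ∈ Finset.range T,
    pol θ (stSeq s0 τ.2 t) (pad τ.1 t) * p (stSeq s0 τ.2 t) (pad τ.1 t) (stSeq s0 τ.2 (t + 1))

/-- Product of safety indicators `∏_{t=1}^{m} 𝟙(s_t ∈ Safe)` along a trajectory. -/
def safeProd {S : Type*} [Nonempty S] (Safe : Set S) [DecidablePred (· ∈ Safe)]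
    (s0 : S) {T : ℕ} (ss : Fin T → S) (m : ℕ) : ℝ :=
  ∏ t ∈ Finset.Icc 1 m, safeInd Safe (stSeq s0 ss t)

/-- One step safety probability `W_T(θ,s) = E[G_T | S_{T-1} = s]`. -/
def WT {S A : Type*} [Fintype S] [Fintype A] {d : ℕ}
    (Safe : Set S) [DecidablePred (· ∈ Safe)]
    (p : S → A → S → ℝ) (pol : EuclideanSpace ℝ (Fin d) → S → A → ℝ)
    (θ : EuclideanSpace ℝ (Fin d)) (s : S) : ℝ :=
  ∑ a, pol θ s a * ∑ s', p s a s' * safeInd Safe s'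

/-
The full trajectories extending a partial trajectory `σ` with last state `s = s_{T-1}` are its
extensions by a last action `a` and a last state `s'`, and
`q_θ(τ) G_1(τ) = q_θ^{(T-1)}(σ) (∏_{t=1}^{T-1} 𝟙(s_t ∈ Safe)) · π(θ,s,a) · p(s,a,s') 𝟙(s' ∈ Safe)`.
So the log trick `π(θ,s,a) ∇log π(θ,s,a) = ∇π(θ,s,a)` turns the sum over these extensions into
`q_θ^{(T-1)}(σ) (∏_{t=1}^{T-1} 𝟙(s_t ∈ Safe)) ∑_a (∑_{s'} p(s,a,s') 𝟙(s' ∈ Safe)) ∇π(θ,s,a)`,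
and the last sum is `∇W_T(θ,s)`.
-/

open Finset

section Trajectory

variable {α S A : Type*} [Nonempty α] [Nonempty S] [Nonempty A] {n : ℕ}

lemma pad_of_lt (f : Fin n → α) {t : ℕ} (ht : t < n) : pad f t = f ⟨t, ht⟩ := dif_pos ht

lemma pad_snoc_of_lt (f : Fin n → α) (x : α) {t : ℕ} (ht : t < n) :
    pad (Fin.snoc f x : Fin (n + 1) → α) t = pad f t := by
  rw [pad_of_lt _ (Nat.lt_succ_of_lt ht), pad_of_lt f ht]
  exact Fin.snoc_castSucc (α := fun _ => α) x f ⟨t, ht⟩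

lemma pad_snoc_self (f : Fin n → α) (x : α) : pad (Fin.snoc f x : Fin (n + 1) → α) n = x := by
  rw [pad_of_lt _ n.lt_succ_self]
  exact Fin.snoc_last (α := fun _ => α) x f

lemma stSeq_snoc_of_le (s0 : S) (ss : Fin n → S) (s' : S) {t : ℕ} (ht : t ≤ n) :
    stSeq s0 (Fin.snoc ss s' : Fin (n + 1) → S) t = stSeq s0 ss t := by
  cases t with
  | zero => rfl
  | succ m => exact pad_snoc_of_lt ss s' (by omega)

lemma stSeq_snoc_succ_self (s0 : S) (ss : Fin n → S) (s' : S) :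
    stSeq s0 (Fin.snoc ss s' : Fin (n + 1) → S) (n + 1) = s' :=
  pad_snoc_self ss s'

lemma qTraj_snoc {d : ℕ} (p : S → A → S → ℝ) (pol : EuclideanSpace ℝ (Fin d) → S → A → ℝ)
    (s0 : S) (θ : EuclideanSpace ℝ (Fin d)) (aa : Fin n → A) (ss : Fin n → S) (a : A) (s' : S) :
    qTraj p pol s0 (n + 1) θ (Fin.snoc aa a, Fin.snoc ss s') =
      qTraj p pol s0 n θ (aa, ss) * (pol θ (stSeq s0 ss n) a * p (stSeq s0 ss n) a s') := by
  rw [qTraj, prod_range_succ, qTraj, stSeq_snoc_of_le s0 ss s' le_rfl,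
    stSeq_snoc_succ_self, pad_snoc_self]
  congr 1
  refine prod_congr rfl fun t ht => ?_
  have ht : t < n := mem_range.mp ht
  rw [stSeq_snoc_of_le s0 ss s' ht.le, stSeq_snoc_of_le s0 ss s' ht, pad_snoc_of_lt aa a ht]

lemma safeProd_snoc (Safe : Set S) [DecidablePred (· ∈ Safe)] (s0 : S) (ss : Fin n → S)
    (s' : S) :
    safeProd Safe s0 (Fin.snoc ss s' : Fin (n + 1) → S) (n + 1) =
      safeProd Safe s0 ss n * safeInd Safe s' := by
  rw [safeProd, prod_Icc_succ_top (by omega), stSeq_snoc_succ_self, safeProd]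
  congr 1
  exact prod_congr rfl fun t ht => by rw [stSeq_snoc_of_le s0 ss s' (mem_Icc.mp ht).2]

end Trajectory

lemma sum_trajectory_snoc {A S M : Type*} [Fintype A] [Fintype S] [AddCommMonoid M] {n : ℕ}
    (F : (Fin (n + 1) → A) × (Fin (n + 1) → S) → M) :
    ∑ τ, F τ = ∑ σ : (Fin n → A) × (Fin n → S), ∑ a, ∑ s',
      F (Fin.snoc σ.1 a, Fin.snoc σ.2 s') := by
  rw [← ((Equiv.prodComm _ _).trans <| (Equiv.prodProdProdComm A S (Fin n → A) (Fin n → S)).trans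
    ((Fin.snocEquiv fun _ => A).prodCongr (Fin.snocEquiv fun _ => S))).sum_comp]
  simp only [Fintype.sum_prod_type]
  rfl

lemma gradient_sum_mul_const {ι F : Type*} [NormedAddCommGroup F] [InnerProductSpace ℝ F]
    [CompleteSpace F] (s : Finset ι) (f : ι → F → ℝ) (c : ι → ℝ) {x : F}
    (hf : ∀ i ∈ s, DifferentiableAt ℝ (f i) x) :
    gradient (fun y => ∑ i ∈ s, f i y * c i) x = ∑ i ∈ s, c i • gradient (f i) x := by
  have h : HasFDerivAt (fun y => ∑ i ∈ s, f i y * c i) (∑ i ∈ s, c i • fderiv ℝ (f i) x) x :=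
    HasFDerivAt.fun_sum fun i hi => (hf i hi).hasFDerivAt.mul_const (c i)
  simp only [gradient, h.fderiv, map_sum, map_smul]

lemma gradient_WT {S A : Type*} [Fintype S] [Fintype A] {d : ℕ} (Safe : Set S)
    [DecidablePred (· ∈ Safe)] (p : S → A → S → ℝ) (pol : EuclideanSpace ℝ (Fin d) → S → A → ℝ)
    (s : S) {θ : EuclideanSpace ℝ (Fin d)}
    (hpol : ∀ a, DifferentiableAt ℝ (fun θ => pol θ s a) θ) :
    gradient (fun θ' => WT Safe p pol θ' s) θ =
      ∑ a, (∑ s', p s a s' * safeInd Safe s') • gradient (fun θ' => pol θ' s a) θ :=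
  gradient_sum_mul_const _ (fun a θ' => pol θ' s a) _ fun a _ => hpol a

lemma smul_gradient_WT_eq_sum_snoc {S A : Type*} [Fintype S] [Fintype A] [Nonempty S]
    [Nonempty A] (Safe : Set S) [DecidablePred (· ∈ Safe)] {d : ℕ} (p : S → A → S → ℝ)
    (pol : EuclideanSpace ℝ (Fin d) → S → A → ℝ) (s0 : S) {n : ℕ} (θ : EuclideanSpace ℝ (Fin d))
    (hpol_ne : ∀ s a, pol θ s a ≠ 0)
    (hpol_diff : ∀ s a, DifferentiableAt ℝ (fun θ => pol θ s a) θ) (σ : (Fin n → A) × (Fin n → S)) :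
    (qTraj p pol s0 n θ σ * safeProd Safe s0 σ.2 n) •
        gradient (fun θ' => WT Safe p pol θ' (stSeq s0 σ.2 n)) θ =
      ∑ a, ∑ s',
        (qTraj p pol s0 (n + 1) θ (Fin.snoc σ.1 a, Fin.snoc σ.2 s') *
            safeProd Safe s0 (Fin.snoc σ.2 s' : Fin (n + 1) → S) (n + 1)) •
          ((pol θ (stSeq s0 (Fin.snoc σ.2 s' : Fin (n + 1) → S) n)
              (pad (Fin.snoc σ.1 a : Fin (n + 1) → A) n))⁻¹ •
            gradient (fun θ' => pol θ' (stSeq s0 (Fin.snoc σ.2 s' : Fin (n + 1) → S) n)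
              (pad (Fin.snoc σ.1 a : Fin (n + 1) → A) n)) θ) := by
  obtain ⟨aa, ss⟩ := σ
  simp only [qTraj_snoc, safeProd_snoc, stSeq_snoc_of_le s0 ss _ le_rfl, pad_snoc_self,
    gradient_WT Safe p pol _ (hpol_diff _), smul_sum, smul_smul, sum_smul]
  refine Fintype.sum_congr _ _ fun a => Fintype.sum_congr _ _ fun s' => ?_
  have hπ := hpol_ne (stSeq s0 ss n) a
  congr 1
  field_simp

theorem expectation_grad_WT_eq_logtrick_general
    {S A : Type*} [Fintype S] [Fintype A] [Nonempty S] [Nonempty A]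
    (Safe : Set S) [DecidablePred (· ∈ Safe)] (d : ℕ)
    (p : S → A → S → ℝ)
    (pol : EuclideanSpace ℝ (Fin d) → S → A → ℝ)
    (hpol0 : ∀ θ s a, 0 < pol θ s a)
    (hpold : ∀ s a, Differentiable ℝ (fun θ => pol θ s a))
    (T : ℕ) (hT : 2 ≤ T) (s0 : S) :
    ∀ θ : EuclideanSpace ℝ (Fin d),
      ∑ σ : (Fin (T - 1) → A) × (Fin (T - 1) → S),
        (qTraj p pol s0 (T - 1) θ σ * safeProd Safe s0 σ.2 (T - 1)) •
          gradient (fun θ' => WT Safe p pol θ' (stSeq s0 σ.2 (T - 1))) θ =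
      ∑ τ : (Fin T → A) × (Fin T → S),
        (qTraj p pol s0 T θ τ * safeProd Safe s0 τ.2 T) •
          ((pol θ (stSeq s0 τ.2 (T - 1)) (pad τ.1 (T - 1)))⁻¹ •
            gradient (fun θ' => pol θ' (stSeq s0 τ.2 (T - 1)) (pad τ.1 (T - 1))) θ) := by
  intro θ
  obtain ⟨n, rfl⟩ : ∃ n, T = n + 1 := ⟨T - 1, by omega⟩
  rw [sum_trajectory_snoc]
  exact Fintype.sum_congr _ _ <| smul_gradient_WT_eq_sum_snoc Safe p pol s0 (n := n) θ
    (fun s a => (hpol0 θ s a).ne') (fun s a => (hpold s a) θ)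

/-- Equation (70) of the paper:
`E[∇_θ E[G_T | S_{T-1}] ∏_{t=1}^{T-1} 𝟙(S_t ∈ Safe) | S_0]
  = E[G_1 ∇_θ log π_θ(A_{T-1} | S_{T-1}) | S_0]`,
where the left-hand side is a sum over partial trajectories `σ = (a_0, s_1, …, a_{T-2}, s_{T-1})`
and the right-hand side over full trajectories `τ = (a_0, s_1, …, a_{T-1}, s_T)`. -/
theorem expectation_grad_WT_eq_logtrick
    {S A : Type*} [Fintype S] [Fintype A] [Nonempty S] [Nonempty A]
    (Safe : Set S) [DecidablePred (· ∈ Safe)] (d : ℕ)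
    (p : S → A → S → ℝ)
    (hp0 : ∀ s a s', 0 ≤ p s a s') (hp1 : ∀ s a, ∑ s', p s a s' = 1)
    (pol : EuclideanSpace ℝ (Fin d) → S → A → ℝ)
    (hpol0 : ∀ θ s a, 0 < pol θ s a) (hpol1 : ∀ θ s, ∑ a, pol θ s a = 1)
    (hpold : ∀ s a, Differentiable ℝ (fun θ => pol θ s a))
    (T : ℕ) (hT : 2 ≤ T) (s0 : S) (hs0 : s0 ∈ Safe) :
    ∀ θ : EuclideanSpace ℝ (Fin d),
      ∑ σ : (Fin (T - 1) → A) × (Fin (T - 1) → S),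
        (qTraj p pol s0 (T - 1) θ σ * safeProd Safe s0 σ.2 (T - 1)) •
          gradient (fun θ' => WT Safe p pol θ' (stSeq s0 σ.2 (T - 1))) θ =
      ∑ τ : (Fin T → A) × (Fin T → S),
        (qTraj p pol s0 T θ τ * safeProd Safe s0 τ.2 T) •
          ((pol θ (stSeq s0 τ.2 (T - 1)) (pad τ.1 (T - 1)))⁻¹ •
            gradient (fun θ' => pol θ' (stSeq s0 τ.2 (T - 1)) (pad τ.1 (T - 1))) θ) :=
  expectation_grad_WT_eq_logtrick_general Safe d p pol hpol0 hpold T hT s0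

end
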